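/- arXiv:2307.00605 — 3 statements merged into one kernel-verified Lean document; each statement's English description precedes it below -/
import Mathlib

section
/- For every f ∈ M, the wave u^f is twice continuously differentiable on [0,∞), u^f(t) ∈ dom L₀* for all t ≥ 0, (u^f)''(t) + L₀*u^f(t) = 0 for all t ≥ 0, u^f(0) = (u^f)'(0) = 0, and Γ₁u^f(t) = f(t) for all t ≥ 0; i.e., u^f is a classical solution of the dynamical system with boundary control determined by L₀. -/
open MeasureTheory
open scoped ComplexInnerProductSpace

variable {H : Type*} [NormedAddCommGroup H] [InnerProductSpace ℂ H] [CompleteSpace H]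

/-- `Iᵗ = L^{-1/2}·sin(t·L^{1/2})`, realized by applying the continuous functional calculus of
the bounded positive self-adjoint operator `T = L⁻¹` to the continuous function
`hₜ(x) = √x·sin(t/√x)` (for `x > 0`, extended by `0` at `x ≤ 0`). -/
noncomputable def waveOp (T : H →L[ℂ] H) (t : ℝ) : H →L[ℂ] H :=
  cfc (fun x : ℝ => if 0 < x then Real.sqrt x * Real.sin (t / Real.sqrt x) else 0) T

/-- The class `M` of smooth controls: smooth `K`-valued functions of time vanishing near `t = 0`
(all time functions are extended by zero to `t < 0`). -/
def IsSmoothControl (K : Submodule ℂ H) (f : ℝ → H) : Prop :=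
  ContDiff ℝ (⊤ : ℕ∞) f ∧ (∀ t, f t ∈ K) ∧ ∃ ε > 0, ∀ t ≤ ε, f t = 0

/-- The wave `u^f(t) = -f(t) + ∫₀ᵗ I^{t-s} f''(s) ds` (Bochner integral). -/
noncomputable def wave (T : H →L[ℂ] H) (f : ℝ → H) (t : ℝ) : H :=
  -f t + ∫ s in (0:ℝ)..t, waveOp T (t - s) (deriv (deriv f) s)

/-- The context of the paper: `L₀` is a closed, densely defined, symmetric, positive definite
operator in the Hilbert space `H`; `L` is its Friedrichs (self-adjoint) extension,
`L₀ ⊆ L ⊆ L₀*`, with an everywhere defined bounded self-adjoint positive injective inverse `T`;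
`K = ker L₀*`.  The boundary operators are `Γ₁y = T(L₀*y) − y` and `Γ₂y = P(L₀*y)`, where `P`
is the orthogonal projection onto `K`. -/
structure Setting (L₀ L : H →ₗ.[ℂ] H) (T : H →L[ℂ] H) (K : Submodule ℂ H) : Prop where
  dense_domain : Dense (L₀.domain : Set H)
  closed : L₀.IsClosed
  symmetric : ∀ x y : L₀.domain, ⟪L₀ x, (y : H)⟫ = ⟪(x : H), L₀ y⟫
  posdef : ∃ γ : ℝ, 0 < γ ∧ ∀ x : L₀.domain, γ * ‖(x : H)‖ ^ 2 ≤ (⟪L₀ x, (x : H)⟫).re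
  extension : L₀ ≤ L
  le_adjoint : L ≤ L₀.adjoint
  selfadjoint : L.adjoint = L
  T_selfadjoint : IsSelfAdjoint T
  T_positive : ∀ x : H, 0 ≤ (⟪T x, x⟫).re
  T_injective : Function.Injective T
  T_inv_left : ∀ x : L.domain, T (L x) = x
  T_mem_domain : ∀ y : H, T y ∈ L.domain
  T_inv_right : ∀ y : H, ∀ hy : T y ∈ L.domain, L ⟨T y, hy⟩ = y
  kernel : ∀ x : H, x ∈ K ↔ ∃ hx : x ∈ L₀.adjoint.domain, L₀.adjoint ⟨x, hx⟩ = 0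

/-- The reachable set `U^τ = {u^f(τ) : f ∈ M}` for `τ ≥ 0`, and `{0}` for `τ < 0`. -/
def reachSet (K : Submodule ℂ H) (T : H →L[ℂ] H) (τ : ℝ) : Set H :=
  if 0 ≤ τ then {x | ∃ f, IsSmoothControl K f ∧ wave T f τ = x} else {0}

/-- The total reachable set `U = span ⋃_{τ>0} U^τ`. -/
def reachSpan (K : Submodule ℂ H) (T : H →L[ℂ] H) : Submodule ℂ H :=
  Submodule.span ℂ (⋃ τ ∈ Set.Ioi (0:ℝ), reachSet K T τ)

/-- The wave `v^ψ(t) = ∫₀ᵗ I^{t-s} ψ(s) ds` produced by a source `ψ` in system `β`. -/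
noncomputable def sourceWave (T : H →L[ℂ] H) (ψ : ℝ → H) (t : ℝ) : H :=
  ∫ s in (0:ℝ)..t, waveOp T (t - s) (ψ s)

/-!
Write `u^f = -f + w` with `w(t) = ∫₀ᵗ I^{t-s} f''(s) ds`. Because `f` vanishes near `0`, the
derivatives of `w` fall on `f`: `w''(t) = ∫₀ᵗ I^{t-s} f⁗(s) ds`. Two integrations by parts, through
the kernels `T Iʳ` and `T cos(r √L)` (whose derivatives `T cos(r √L)` and `-Iʳ` come from
second-order Taylor bounds on the scalar kernels, transported by the functional calculus of `T`),
give `T (f'' - w'') = w`. Hence `w ∈ dom L` with `L w = -u''`, while `f(t) ∈ ker L₀*`; so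
`L₀* u = -u''` and `Γ₁ u = T (-u'') - u = f`.
-/

open Set Filter Topology
open scoped ContDiff

section Calculus

variable {E : Type*} [NormedAddCommGroup E] [NormedSpace ℝ E]

theorem norm_sub_sub_smul_le_sq {f f' : ℝ → E} (hf : ∀ x, HasDerivAt f (f' x) x)
    (hf' : LipschitzWith 1 f') (u d : ℝ) : ‖f (u + d) - f u - d • f' u‖ ≤ d ^ 2 := by
  have hderiv : ∀ s ∈ uIcc 0 d, HasDerivWithinAt (fun s => f (u + s) - s • f' u)
      (f' (u + s) - f' u) (uIcc 0 d) s := fun s _ =>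
    (((hf (u + s)).comp_const_add u s).sub ((hasDerivAt_id s).smul_const (f' u))).hasDerivWithinAt
      |>.congr_deriv (by simp)
  have hbound : ∀ s ∈ uIcc 0 d, ‖f' (u + s) - f' u‖ ≤ |d| := fun s hs => by
    simpa [← dist_eq_norm] using (hf'.dist_le_mul (u + s) u).trans
      (by simpa using abs_sub_left_of_mem_uIcc hs)
  have := (convex_uIcc 0 d).norm_image_sub_le_of_norm_hasDerivWithin_le hderiv hbound
    left_mem_uIcc right_mem_uIcc
  simpa [sub_right_comm _ (d • f' u), sq, abs_mul_abs_self] using this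

theorem hasDerivAt_of_norm_sub_sub_smul_le {f : ℝ → E} {f' : E} {r C : ℝ}
    (h : ∀ y, ‖f y - f r - (y - r) • f'‖ ≤ C * (y - r) ^ 2) : HasDerivAt f f' r := by
  refine hasDerivAt_iff_isLittleO.mpr (Asymptotics.IsBigO.trans_isLittleO ?_
    (Asymptotics.isLittleO_pow_sub_sub r one_lt_two))
  exact .of_bound C (Eventually.of_forall fun y => by simpa using h y)

theorem eqOn_zero_deriv_of_eqOn_zero_Iic {g : ℝ → E} {a : ℝ} (hg : Differentiable ℝ g)
    (h : EqOn g 0 (Iic a)) : EqOn (deriv g) 0 (Iic a) := fun r hr =>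
  (uniqueDiffOn_Iic a r hr).eq_deriv _ (hg r).hasDerivAt.hasDerivWithinAt
    ((hasDerivWithinAt_const r _ 0).congr (fun _ hx => h hx) (h hr))

theorem eqOn_zero_iterate_deriv_of_eqOn_zero_Iic {g : ℝ → E} {a : ℝ} (hg : ContDiff ℝ ∞ g)
    (h : EqOn g 0 (Iic a)) (n : ℕ) : EqOn (deriv^[n] g) 0 (Iic a) := by
  induction n with
  | zero => exact h
  | succ n ih =>
    rw [Function.iterate_succ_apply']
    exact eqOn_zero_deriv_of_eqOn_zero_Iic ((hg.iterate_deriv n).differentiable (by simp)) ih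

end Calculus

theorem HasDerivAt.clm_restrictScalars {E F : Type*} [NormedAddCommGroup E] [NormedSpace ℂ E]
    [NormedAddCommGroup F] [NormedSpace ℂ F] {X : ℝ → E →L[ℂ] F} {X' : E →L[ℂ] F} {r : ℝ}
    (h : HasDerivAt X X' r) :
    HasDerivAt (fun t => (X t).restrictScalars ℝ) (X'.restrictScalars ℝ) r :=
  (ContinuousLinearMap.restrictScalarsL ℂ E F ℝ ℝ).hasFDerivAt.comp_hasDerivAt r h

section CausalConvolution

variable {E F G : Type*} [NormedAddCommGroup E] [NormedSpace ℝ E] [NormedAddCommGroup F]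
  [NormedSpace ℝ F] [NormedAddCommGroup G] [NormedSpace ℝ G]

noncomputable def causalConv (Φ : ℝ → E →L[ℝ] F) (g : ℝ → E) (t : ℝ) : F :=
  ∫ s in (0:ℝ)..t, Φ (t - s) (g s)

variable {Φ : ℝ → E →L[ℝ] F} {g : ℝ → E}

@[simp]
theorem causalConv_zero (Φ : ℝ → E →L[ℝ] F) (g : ℝ → E) : causalConv Φ g 0 = 0 :=
  intervalIntegral.integral_same

@[simp]
theorem causalConv_neg (Φ : ℝ → E →L[ℝ] F) (g : ℝ → E) (t : ℝ) :
    causalConv (fun r => -Φ r) g t = -causalConv Φ g t :=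
  intervalIntegral.integral_neg

theorem causalConv_eq_integral (Φ : ℝ → E →L[ℝ] F) (g : ℝ → E) (t : ℝ) :
    causalConv Φ g t = ∫ s in (0:ℝ)..t, Φ s (g (t - s)) := by
  simpa [causalConv] using
    intervalIntegral.integral_comp_sub_left (fun s => Φ s (g (t - s))) t (a := 0) (b := t)

theorem causalConv_eq_integral_of_le (hΦ : Continuous Φ) (hg : Continuous g)
    (hg0 : EqOn g 0 (Iic 0)) {t A : ℝ} (htA : t ≤ A) :
    causalConv Φ g t = ∫ s in (0:ℝ)..A, Φ s (g (t - s)) := by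
  have hcont : Continuous fun s => Φ s (g (t - s)) := hΦ.clm_apply (by fun_prop)
  have htail : ∫ s in t..A, Φ s (g (t - s)) = 0 := by
    refine (intervalIntegral.integral_congr fun s hs => ?_).trans intervalIntegral.integral_zero
    rw [uIcc_of_le htA] at hs
    simp [hg0 (show t - s ≤ 0 by linarith [hs.1])]
  rw [causalConv_eq_integral, ← intervalIntegral.integral_add_adjacent_intervals
    (hcont.intervalIntegrable 0 t) (hcont.intervalIntegrable t A), htail, add_zero]

theorem hasDerivAt_causalConv (hΦ : Continuous Φ) (hg : ContDiff ℝ 1 g)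
    (hg0 : EqOn g 0 (Iic 0)) (t₀ : ℝ) :
    HasDerivAt (causalConv Φ g) (causalConv Φ (deriv g) t₀) t₀ := by
  obtain ⟨hgd, hg'⟩ := contDiff_one_iff_deriv.mp hg
  -- Near `t₀` the upper limit can be frozen at `A`, since `g (t - s) = 0` for `s ≥ t`;
  -- then only the integrand has to be differentiated.
  set A := t₀ + 1
  have hint (x : ℝ) : Continuous fun s => Φ s (g (x - s)) := hΦ.clm_apply (by fun_prop)
  have hint' (x : ℝ) : Continuous fun s => Φ s (deriv g (x - s)) := hΦ.clm_apply (by fun_prop)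
  obtain ⟨C, hC⟩ := (isCompact_closedBall t₀ 1 |>.prod (isCompact_uIcc (a := 0) (b := A)))
    |>.exists_bound_of_continuousOn (f := fun p : ℝ × ℝ => Φ p.2 (deriv g (p.1 - p.2)))
      (hΦ.comp continuous_snd |>.clm_apply (by fun_prop)).continuousOn
  have hfixed : HasDerivAt (fun t => ∫ s in (0:ℝ)..A, Φ s (g (t - s)))
      (∫ s in (0:ℝ)..A, Φ s (deriv g (t₀ - s))) t₀ :=
    (intervalIntegral.hasDerivAt_integral_of_dominated_loc_of_deriv_le (bound := fun _ => C)
      (Metric.ball_mem_nhds t₀ one_pos)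
      (Eventually.of_forall fun x => (hint x).aestronglyMeasurable)
      ((hint t₀).intervalIntegrable _ _) (hint' t₀).aestronglyMeasurable
      (Eventually.of_forall fun s hs x hx =>
        hC (x, s) ⟨Metric.ball_subset_closedBall hx, uIoc_subset_uIcc hs⟩)
      intervalIntegrable_const
      (Eventually.of_forall fun s _ x _ =>
        (Φ s).hasFDerivAt.comp_hasDerivAt x ((hgd (x - s)).hasDerivAt.comp_sub_const x s))).2
  rw [← causalConv_eq_integral_of_le hΦ hg' (eqOn_zero_deriv_of_eqOn_zero_Iic hgd hg0)
    (by linarith : t₀ ≤ A)] at hfixed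
  exact hfixed.congr_of_eventuallyEq <| eventually_lt_nhds (by linarith : t₀ < A) |>.mono
    fun t ht => causalConv_eq_integral_of_le hΦ hgd.continuous hg0 ht.le

theorem causalConv_deriv [CompleteSpace F] {Φ' : ℝ → E →L[ℝ] F} (hΦ : ∀ r, HasDerivAt Φ (Φ' r) r)
    (hΦ' : Continuous Φ') {g' : ℝ → E} (hg : ∀ s, HasDerivAt g (g' s) s) (hg' : Continuous g')
    (t : ℝ) : causalConv Φ g' t = Φ 0 (g t) - Φ t (g 0) + causalConv Φ' g t := by
  have hΦc : Continuous Φ := continuous_iff_continuousAt.mpr fun r => (hΦ r).continuousAt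
  have hgc : Continuous g := continuous_iff_continuousAt.mpr fun s => (hg s).continuousAt
  have hprod (s : ℝ) : HasDerivAt (fun s => Φ (t - s) (g s))
      (-Φ' (t - s) (g s) + Φ (t - s) (g' s)) s := by
    simpa using ((hΦ (t - s)).comp_const_sub t s).clm_apply (hg s)
  have hi₁ : IntervalIntegrable (fun s => -Φ' (t - s) (g s)) volume 0 t :=
    ((hΦ'.comp (continuous_const.sub continuous_id)).clm_apply hgc).neg.intervalIntegrable _ _
  have hi₂ : IntervalIntegrable (fun s => Φ (t - s) (g' s)) volume 0 t :=
    ((hΦc.comp (continuous_const.sub continuous_id)).clm_apply hg').intervalIntegrable _ _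
  have hftc := intervalIntegral.integral_eq_sub_of_hasDerivAt (fun s _ => hprod s) (hi₁.add hi₂)
  rw [intervalIntegral.integral_add hi₁ hi₂, intervalIntegral.integral_neg] at hftc
  simp only [causalConv, sub_self, sub_zero] at hftc ⊢
  rw [← hftc]
  abel

theorem ContinuousLinearMap.map_causalConv [CompleteSpace F] [CompleteSpace G] (B : F →L[ℝ] G)
    (hΦ : Continuous Φ) (hg : Continuous g) (t : ℝ) :
    B (causalConv Φ g t) = causalConv (fun r => B ∘L Φ r) g t :=
  (B.intervalIntegral_comp_comm
    (((hΦ.comp (continuous_const.sub continuous_id)).clm_apply hg).intervalIntegrable _ _)).symm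

end CausalConvolution

section Kernels

theorem continuous_pow_mul_comp_div {φ : ℝ → ℝ} (hφ : Continuous φ) {B : ℝ}
    (hB : ∀ z, |φ z| ≤ B) {n : ℕ} (hn : n ≠ 0) (t : ℝ) :
    Continuous fun y => y ^ n * φ (t / y) := by
  refine continuous_iff_continuousAt.mpr fun y₀ => ?_
  rcases eq_or_ne y₀ 0 with rfl | hy₀
  · have hpow : Tendsto (fun y : ℝ => y ^ n) (𝓝 0) (𝓝 0) := by
      simpa [zero_pow hn] using (continuous_pow n).tendsto (0 : ℝ)
    simpa [ContinuousAt, zero_pow hn] using hpow.zero_mul_isBoundedUnder_le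
      (isBoundedUnder_of ⟨B, fun y => (Real.norm_eq_abs _).trans_le (hB _)⟩)
  · exact (continuous_pow n).continuousAt.mul
      (hφ.continuousAt.comp (continuousAt_const.div continuousAt_id hy₀))

theorem abs_mul_comp_div_sub_le {φ : ℝ → ℝ} (hφ : LipschitzWith 1 φ) (y a b : ℝ) :
    |y * φ (a / y) - y * φ (b / y)| ≤ |a - b| := by
  rcases eq_or_ne y 0 with rfl | hy
  · simp
  have := hφ.dist_le_mul (a / y) (b / y)
  rw [Real.dist_eq, Real.dist_eq, NNReal.coe_one, one_mul, ← sub_div, abs_div] at this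
  rw [← mul_sub, abs_mul]
  calc |y| * |φ (a / y) - φ (b / y)| ≤ |y| * (|a - b| / |y|) := by gcongr
    _ = |a - b| := mul_div_cancel₀ _ (abs_ne_zero.mpr hy)

theorem abs_pow_mul_comp_div_taylor_le {φ φ' : ℝ → ℝ} (hφ : ∀ z, HasDerivAt φ (φ' z) z)
    (hφ' : LipschitzWith 1 φ') (n : ℕ) (y t d : ℝ) :
    |y ^ (n + 2) * φ ((t + d) / y) - y ^ (n + 2) * φ (t / y) - d * (y ^ (n + 1) * φ' (t / y))|
      ≤ |y| ^ n * d ^ 2 := by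
  rcases eq_or_ne y 0 with rfl | hy
  · simpa using mul_nonneg (pow_nonneg le_rfl n) (sq_nonneg d)
  have key := norm_sub_sub_smul_le_sq hφ hφ' (t / y) (d / y)
  rw [Real.norm_eq_abs, smul_eq_mul, ← add_div] at key
  have hrw : y ^ (n + 2) * φ ((t + d) / y) - y ^ (n + 2) * φ (t / y)
        - d * (y ^ (n + 1) * φ' (t / y))
      = y ^ (n + 2) * (φ ((t + d) / y) - φ (t / y) - d / y * φ' (t / y)) := by
    field_simp
    ring
  rw [hrw, abs_mul, abs_pow]
  calc |y| ^ (n + 2) * |φ ((t + d) / y) - φ (t / y) - d / y * φ' (t / y)|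
      ≤ |y| ^ (n + 2) * (d / y) ^ 2 := by gcongr
    _ = |y| ^ n * d ^ 2 := by
      rw [div_pow, ← sq_abs y]
      field_simp
      ring

-- For `x = λ⁻¹`, `λ` in the spectrum of `L`: `sinKernel t x = λ^{-1/2} sin (t λ^{1/2})` is the
-- symbol of `Iᵗ` and `cosKernel t x = λ⁻¹ cos (t λ^{1/2})`. Both are written as `y ^ n φ (t / y)`
-- with `y = √x`, which is continuous at `y = 0` (where `t / 0 = 0`).
noncomputable def sinKernel (t x : ℝ) : ℝ := √x * Real.sin (t / √x)

noncomputable def cosKernel (t x : ℝ) : ℝ := √x ^ 2 * Real.cos (t / √x)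

theorem continuous_sinKernel (t : ℝ) : Continuous (sinKernel t) :=
  ((continuous_pow_mul_comp_div Real.continuous_sin Real.abs_sin_le_one one_ne_zero t).comp
    Real.continuous_sqrt).congr fun x => by simp [sinKernel]

theorem continuous_cosKernel (t : ℝ) : Continuous (cosKernel t) :=
  (continuous_pow_mul_comp_div Real.continuous_cos Real.abs_cos_le_one two_ne_zero t).comp
    Real.continuous_sqrt

end Kernels

section FunctionalCalculus

variable {A : Type*} [CStarAlgebra A]

theorem lipschitzWith_cfc {a : A} {g : ℝ → ℝ → ℝ} (hg : ∀ t, Continuous (g t)) {K : NNReal}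
    (h : ∀ s t, ∀ x ∈ spectrum ℝ a, |g s x - g t x| ≤ K * |s - t|) :
    LipschitzWith K fun t => cfc (g t) a :=
  LipschitzWith.of_dist_le_mul fun s t => by
    rw [dist_eq_norm, Real.dist_eq, ← cfc_sub (g s) (g t) a (hg s).continuousOn
      (hg t).continuousOn]
    exact norm_cfc_le (by positivity) fun x hx => (Real.norm_eq_abs _).trans_le (h s t x hx)

theorem hasDerivAt_cfc_of_abs_le {a : A} {g g' : ℝ → ℝ → ℝ} (hg : ∀ t, Continuous (g t))
    {r C : ℝ} (hg' : Continuous (g' r)) (hC : 0 ≤ C)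
    (h : ∀ y, ∀ x ∈ spectrum ℝ a, |g y x - g r x - (y - r) * g' r x| ≤ C * (y - r) ^ 2) :
    HasDerivAt (fun t => cfc (g t) a) (cfc (g' r) a) r := by
  refine hasDerivAt_of_norm_sub_sub_smul_le (C := C) fun y => ?_
  rw [← cfc_sub (g y) (g r) a (hg y).continuousOn (hg r).continuousOn,
    ← cfc_smul (y - r) (g' r) a hg'.continuousOn,
    ← cfc_sub (fun x => g y x - g r x) (fun x => (y - r) • g' r x) a
      ((hg y).sub (hg r)).continuousOn (hg'.const_smul (y - r)).continuousOn]
  exact norm_cfc_le (by positivity) fun x hx => (Real.norm_eq_abs _).trans_le (h y x hx)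

variable {a : A}

theorem cfc_sinKernel_zero : cfc (sinKernel 0) a = 0 := by
  rw [show sinKernel 0 = fun _ => 0 from funext fun x => by simp [sinKernel], cfc_const_zero]

theorem lipschitzWith_cfc_sinKernel : LipschitzWith 1 fun t => cfc (sinKernel t) a :=
  lipschitzWith_cfc continuous_sinKernel fun s t x _ => by
    simpa [sinKernel] using abs_mul_comp_div_sub_le Real.lipschitzWith_sin √x s t

theorem hasDerivAt_cfc_cosKernel (r : ℝ) :
    HasDerivAt (fun t => cfc (cosKernel t) a) (-cfc (sinKernel r) a) r := by
  rw [← cfc_neg]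
  refine hasDerivAt_cfc_of_abs_le (g' := fun t x => -sinKernel t x) continuous_cosKernel
    (continuous_sinKernel r).neg zero_le_one fun y x _ => ?_
  have := abs_pow_mul_comp_div_taylor_le Real.hasDerivAt_cos Real.lipschitzWith_sin.neg 0 √x r
    (y - r)
  simpa [cosKernel, sinKernel] using this

variable [PartialOrder A] [StarOrderedRing A]

theorem cfc_cosKernel_zero (ha : 0 ≤ a) : cfc (cosKernel 0) a = a := by
  refine (cfc_congr fun x hx => ?_).trans (cfc_id' ℝ a)
  simp [cosKernel, Real.sq_sqrt (spectrum_nonneg_of_nonneg ha hx)]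

theorem mul_cfc_sinKernel (ha : 0 ≤ a) (t : ℝ) :
    a * cfc (sinKernel t) a = cfc (fun x => √x ^ 3 * Real.sin (t / √x)) a := by
  calc a * cfc (sinKernel t) a = cfc (fun x => x) a * cfc (sinKernel t) a := by rw [cfc_id' ℝ a]
    _ = cfc (fun x => x * sinKernel t x) a :=
        (cfc_mul _ _ a (hg := (continuous_sinKernel t).continuousOn)).symm
    _ = _ := cfc_congr fun x hx => ?_
  nth_rw 1 [sinKernel, ← Real.sq_sqrt (spectrum_nonneg_of_nonneg ha hx)]
  ring

theorem hasDerivAt_mul_cfc_sinKernel (ha : 0 ≤ a) (r : ℝ) :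
    HasDerivAt (fun t => a * cfc (sinKernel t) a) (cfc (cosKernel r) a) r := by
  obtain ⟨M, hM⟩ := (spectrum.isCompact (𝕜 := ℝ) a).isBounded.bddAbove
  simp_rw [mul_cfc_sinKernel ha]
  refine hasDerivAt_cfc_of_abs_le (C := √M) (fun t => ?_) (continuous_cosKernel r)
    (Real.sqrt_nonneg M) fun y x hx => ?_
  · exact (continuous_pow_mul_comp_div Real.continuous_sin Real.abs_sin_le_one
      three_ne_zero t).comp Real.continuous_sqrt
  have := abs_pow_mul_comp_div_taylor_le Real.hasDerivAt_sin Real.lipschitzWith_cos 1 √x r (y - r)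
  simp only [add_sub_cancel, abs_of_nonneg (Real.sqrt_nonneg x), pow_one] at this
  exact this.trans (by gcongr; exact hM hx)

end FunctionalCalculus

section Wave

variable {T : H →L[ℂ] H} {f : ℝ → H}

theorem waveOp_eq_cfc_sinKernel (T : H →L[ℂ] H) (t : ℝ) : waveOp T t = cfc (sinKernel t) T := by
  refine congrArg (cfc · T) (funext fun x => ?_)
  split_ifs with hx
  · rfl
  · simp [sinKernel, Real.sqrt_eq_zero'.mpr (not_lt.mp hx)]

theorem continuous_waveOp_restrictScalars (T : H →L[ℂ] H) :
    Continuous fun t => (waveOp T t).restrictScalars ℝ := by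
  simp_rw [waveOp_eq_cfc_sinKernel]
  exact (ContinuousLinearMap.continuous_restrictScalars _).comp
    lipschitzWith_cfc_sinKernel.continuous

theorem wave_eq_causalConv (T : H →L[ℂ] H) (f : ℝ → H) :
    wave T f =
      fun t => -f t + causalConv (fun r => (waveOp T r).restrictScalars ℝ) (deriv^[2] f) t :=
  rfl

theorem hasDerivAt_wave (hf : ContDiff ℝ ∞ f) (hf0 : EqOn f 0 (Iic 0)) (t : ℝ) :
    HasDerivAt (wave T f)
      (-deriv f t + causalConv (fun r => (waveOp T r).restrictScalars ℝ) (deriv^[3] f) t) t := by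
  rw [wave_eq_causalConv]
  exact (hf.differentiable (by simp) t).hasDerivAt.neg.add
    (hasDerivAt_causalConv (continuous_waveOp_restrictScalars T)
      ((hf.iterate_deriv 2).of_le (by simp)) (eqOn_zero_iterate_deriv_of_eqOn_zero_Iic hf hf0 2) t)

theorem hasDerivAt_deriv_wave (hf : ContDiff ℝ ∞ f) (hf0 : EqOn f 0 (Iic 0)) (t : ℝ) :
    HasDerivAt (deriv (wave T f))
      (-deriv^[2] f t + causalConv (fun r => (waveOp T r).restrictScalars ℝ) (deriv^[4] f) t)
      t := by
  rw [funext fun t => (hasDerivAt_wave (T := T) hf hf0 t).deriv]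
  exact ((hf.iterate_deriv 1).differentiable (by simp) t).hasDerivAt.neg.add
    (hasDerivAt_causalConv (continuous_waveOp_restrictScalars T)
      ((hf.iterate_deriv 3).of_le (by simp)) (eqOn_zero_iterate_deriv_of_eqOn_zero_Iic hf hf0 3) t)

theorem contDiff_wave (hf : ContDiff ℝ ∞ f) (hf0 : EqOn f 0 (Iic 0)) : ContDiff ℝ 2 (wave T f) := by
  have hcont : Continuous (deriv (deriv (wave T f))) := by
    rw [funext fun t => (hasDerivAt_deriv_wave (T := T) hf hf0 t).deriv]
    exact ((hf.iterate_deriv 2).continuous.neg).add <| continuous_iff_continuousAt.mpr fun t =>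
      (hasDerivAt_causalConv (continuous_waveOp_restrictScalars T)
        ((hf.iterate_deriv 4).of_le (by simp))
        (eqOn_zero_iterate_deriv_of_eqOn_zero_Iic hf hf0 4) t).continuousAt
  refine contDiff_succ_iff_deriv.mpr ⟨fun t => (hasDerivAt_wave hf hf0 t).differentiableAt,
    by simp, contDiff_one_iff_deriv.mpr ⟨fun t => (hasDerivAt_deriv_wave hf hf0 t).differentiableAt,
    hcont⟩⟩

theorem wave_zero (hf0 : EqOn f 0 (Iic 0)) : wave T f 0 = 0 := by
  simp [wave_eq_causalConv, hf0 self_mem_Iic]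

theorem deriv_wave_zero (hf : ContDiff ℝ ∞ f) (hf0 : EqOn f 0 (Iic 0)) :
    deriv (wave T f) 0 = 0 := by
  simp [(hasDerivAt_wave hf hf0 0).deriv,
    eqOn_zero_deriv_of_eqOn_zero_Iic (hf.differentiable (by simp)) hf0 self_mem_Iic]

theorem apply_causalConv_iterate_deriv_two (hT : 0 ≤ T) {g : ℝ → H} (hg : ContDiff ℝ 2 g)
    (hg0 : g 0 = 0) (hg'0 : deriv g 0 = 0) (t : ℝ) :
    T (causalConv (fun r => (waveOp T r).restrictScalars ℝ) (deriv^[2] g) t)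
      = T (g t) - causalConv (fun r => (waveOp T r).restrictScalars ℝ) g t := by
  obtain ⟨hgd, -, hg'⟩ := (contDiff_succ_iff_deriv (n := 1)).mp hg
  obtain ⟨hg'd, hg''⟩ := contDiff_one_iff_deriv.mp hg'
  set Φ : ℝ → H →L[ℝ] H := fun r => (waveOp T r).restrictScalars ℝ
  set J : ℝ → H →L[ℝ] H := fun r => (T * cfc (sinKernel r) T).restrictScalars ℝ
  set J' : ℝ → H →L[ℝ] H := fun r => (cfc (cosKernel r) T).restrictScalars ℝ
  have hJ (r : ℝ) : HasDerivAt J (J' r) r := (hasDerivAt_mul_cfc_sinKernel hT r).clm_restrictScalars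
  have hJ' (r : ℝ) : HasDerivAt J' (-Φ r) r := by
    simpa [Φ, waveOp_eq_cfc_sinKernel] using
      (hasDerivAt_cfc_cosKernel (a := T) r).clm_restrictScalars
  have hJ'c : Continuous J' := continuous_iff_continuousAt.mpr fun r => (hJ' r).continuousAt
  calc T (causalConv Φ (deriv^[2] g) t)
      = causalConv J (deriv (deriv g)) t := by
        refine ((T.restrictScalars ℝ).map_causalConv (continuous_waveOp_restrictScalars T)
          hg'' t).trans (congrArg (causalConv · _ t) (funext fun r => ?_))
        simp only [J, waveOp_eq_cfc_sinKernel]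
        rfl
    _ = causalConv J' (deriv g) t := by
        rw [causalConv_deriv hJ hJ'c (fun s => (hg'd s).hasDerivAt) hg'']
        simp [J, cfc_sinKernel_zero, hg'0]
    _ = T (g t) - causalConv Φ g t := by
        rw [causalConv_deriv hJ' (continuous_waveOp_restrictScalars T).neg
          (fun s => (hgd s).hasDerivAt) hg'.continuous]
        simp [J', cfc_cosKernel_zero hT, hg0, sub_eq_add_neg]

theorem apply_neg_deriv_deriv_wave (hT : 0 ≤ T) (hf : ContDiff ℝ ∞ f) (hf0 : EqOn f 0 (Iic 0))
    (t : ℝ) : T (-deriv (deriv (wave T f)) t) = wave T f t + f t := by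
  have hvanish := eqOn_zero_iterate_deriv_of_eqOn_zero_Iic hf hf0
  have key := apply_causalConv_iterate_deriv_two hT ((hf.iterate_deriv 2).of_le ENat.LEInfty.out)
    (hvanish 2 self_mem_Iic) (hvanish 3 self_mem_Iic) t
  rw [(hasDerivAt_deriv_wave hf hf0 t).deriv, neg_add, neg_neg, map_add, map_neg,
    show deriv^[4] f = deriv^[2] (deriv^[2] f) from rfl, key, wave_eq_causalConv]
  beta_reduce
  abel

end Wave

section Setting

variable {L₀ L : H →ₗ.[ℂ] H} {T : H →L[ℂ] H} {K : Submodule ℂ H}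

theorem Setting.nonneg (hs : Setting L₀ L T K) : 0 ≤ T :=
  (T.nonneg_iff_isPositive).mpr ⟨hs.T_selfadjoint.isSymmetric, hs.T_positive⟩

theorem Setting.exists_adjoint_apply_eq (hs : Setting L₀ L T K) {y : H} (hy : y ∈ K) (v : H)
    {u : H} (hu : u = T v - y) : ∃ h : u ∈ L₀.adjoint.domain, L₀.adjoint ⟨u, h⟩ = v := by
  subst hu
  obtain ⟨hyd, hy0⟩ := (hs.kernel y).mp hy
  have hTv : T v ∈ L₀.adjoint.domain := hs.le_adjoint.1 (hs.T_mem_domain v)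
  refine ⟨sub_mem hTv hyd, ?_⟩
  rw [show (⟨T v - y, sub_mem hTv hyd⟩ : L₀.adjoint.domain) = ⟨T v, hTv⟩ - ⟨y, hyd⟩ from rfl,
    LinearPMap.map_sub, hy0, sub_zero]
  exact (hs.le_adjoint.2 (x := ⟨T v, hs.T_mem_domain v⟩) rfl).symm.trans (hs.T_inv_right v _)

end Setting

theorem stmt2_general (L₀ L : H →ₗ.[ℂ] H) (T : H →L[ℂ] H) (K : Submodule ℂ H)
    (hs : Setting L₀ L T K)
    (f : ℝ → H) (hf : IsSmoothControl K f) :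
    ContDiffOn ℝ 2 (wave T f) (Set.Ici 0) ∧
    wave T f 0 = 0 ∧ deriv (wave T f) 0 = 0 ∧
    ∀ t : ℝ, 0 ≤ t → ∃ ht : wave T f t ∈ L₀.adjoint.domain,
      deriv (deriv (wave T f)) t + L₀.adjoint ⟨wave T f t, ht⟩ = 0 ∧
      T (L₀.adjoint ⟨wave T f t, ht⟩) - wave T f t = f t := by
  obtain ⟨hsmooth, hK, ε, hε, hfε⟩ := hf
  have hf : ContDiff ℝ ∞ f := by exact_mod_cast hsmooth
  have hf0 : EqOn f 0 (Iic 0) := fun t ht => hfε t (le_trans ht hε.le)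
  refine ⟨(contDiff_wave hf hf0).contDiffOn, wave_zero hf0, deriv_wave_zero hf hf0, fun t _ => ?_⟩
  have hu := apply_neg_deriv_deriv_wave hs.nonneg hf hf0 t
  obtain ⟨hdom, hL⟩ := hs.exists_adjoint_apply_eq (hK t) (-deriv (deriv (wave T f)) t)
    (u := wave T f t) (by rw [hu, add_sub_cancel_right])
  exact ⟨hdom, by rw [hL]; abel, by rw [hL, hu]; abel⟩

/-- For every `f ∈ M`, the wave `u^f` is twice continuously differentiable on
`[0,∞)`, `u^f(t) ∈ dom L₀*` for all `t ≥ 0`, `(u^f)''(t) + L₀*u^f(t) = 0` for all `t ≥ 0`,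
`u^f(0) = (u^f)'(0) = 0`, and `Γ₁u^f(t) = f(t)` for all `t ≥ 0`: `u^f` is a classical solution
of the dynamical system with boundary control determined by `L₀`. -/
theorem stmt2 (L₀ L : H →ₗ.[ℂ] H) (T : H →L[ℂ] H) (K : Submodule ℂ H)
    [Submodule.HasOrthogonalProjection K] (hs : Setting L₀ L T K)
    (f : ℝ → H) (hf : IsSmoothControl K f) :
    ContDiffOn ℝ 2 (wave T f) (Set.Ici 0) ∧
    wave T f 0 = 0 ∧ deriv (wave T f) 0 = 0 ∧
    ∀ t : ℝ, 0 ≤ t → ∃ ht : wave T f t ∈ L₀.adjoint.domain,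
      deriv (deriv (wave T f)) t + L₀.adjoint ⟨wave T f t, ht⟩ = 0 ∧
      T (L₀.adjoint ⟨wave T f t, ht⟩) - wave T f t = f t :=
  stmt2_general L₀ L T K hs f hf
end

section
/- Steady-state property: let f ∈ M, extend f and u^f by zero to t < 0, and for τ > 0 define the delayed control (𝒯_τ f)(t) := f(t − τ). Then 𝒯_τ f ∈ M and u^{𝒯_τ f}(t) = u^f(t − τ) for all t ≥ 0. -/
open MeasureTheory
open scoped ComplexInnerProductSpace

variable {H : Type*} [NormedAddCommGroup H] [InnerProductSpace ℂ H] [CompleteSpace H]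

/- The shifted control is smooth and vanishes near `0`, so `f''` vanishes on `(-∞, 0]`; the
substitution `u = s - τ` turns the Duhamel integral of the delayed control into an integral over
`[-τ, t - τ]`, whose part over `[-τ, 0]` is zero. -/

open Set

section General

variable {E F : Type*} [NormedAddCommGroup E] [NormedAddCommGroup F]

lemma eqOn_zero_Iio_deriv [NormedSpace ℝ E] {f : ℝ → E} {a : ℝ} (hf : EqOn f 0 (Iio a)) :
    EqOn (deriv f) 0 (Iio a) := by
  intro x hx
  rw [hf.deriv isOpen_Iio hx, Pi.zero_def, deriv_const]

lemma deriv_deriv_comp_sub_const [NormedSpace ℝ E] (f : ℝ → E) (τ s : ℝ) :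
    deriv (deriv fun t => f (t - τ)) s = deriv (deriv f) (s - τ) := by
  have hshift : deriv (fun t => f (t - τ)) = fun t => deriv f (t - τ) :=
    funext fun t => deriv_comp_sub_const f τ t
  rw [hshift, deriv_comp_sub_const]

/-- If `g` is not integrable on `[0, b]`, both sides are the junk value `0`. -/
lemma intervalIntegral.integral_eq_integral_from_zero [NormedSpace ℝ F] {g : ℝ → F} {a : ℝ} (ha : a ≤ 0)
    (hg : EqOn g 0 (Iic 0)) (b : ℝ) :
    ∫ x in a..b, g x = ∫ x in 0..b, g x := by
  have hzero : EqOn g 0 (uIcc a 0) := fun x hx => hg (by simpa [ha] using hx.2)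
  have hint : IntervalIntegrable g volume a 0 :=
    (intervalIntegrable_const (c := (0 : F))).congr fun x hx => (hzero (uIoc_subset_uIcc hx)).symm
  by_cases hb : IntervalIntegrable g volume 0 b
  · rw [← intervalIntegral.integral_add_adjacent_intervals hint hb,
      intervalIntegral.integral_congr hzero]
    simp
  · rw [intervalIntegral.integral_undef hb,
      intervalIntegral.integral_undef fun hab => hb (hint.symm.trans hab)]

lemma intervalIntegral.integral_delay [NormedSpace ℂ E] [NormedSpace ℂ F]
    (A : ℝ → E →L[ℂ] F) {g : ℝ → E} (hg : EqOn g 0 (Iic 0))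
    {τ : ℝ} (hτ : 0 ≤ τ) (t : ℝ) :
    ∫ s in 0..t, A (t - s) (g (s - τ)) = ∫ s in 0..t - τ, A (t - τ - s) (g s) := by
  have hshift := intervalIntegral.integral_comp_sub_right (a := 0) (b := t)
    (fun u => A (t - τ - u) (g u)) τ
  simp only [sub_sub_sub_cancel_right] at hshift
  rw [hshift]
  refine intervalIntegral.integral_eq_integral_from_zero (by linarith) (fun u hu => ?_) _
  simp [hg hu]

end General

section SmoothControl

variable {E : Type*} [NormedAddCommGroup E] [InnerProductSpace ℂ E]

lemma IsSmoothControl.comp_sub {K : Submodule ℂ E} {f : ℝ → E} (hf : IsSmoothControl K f)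
    {τ : ℝ} (hτ : 0 ≤ τ) : IsSmoothControl K fun t => f (t - τ) := by
  obtain ⟨hsmooth, hK, ε, hε, hzero⟩ := hf
  exact ⟨hsmooth.comp (contDiff_id.sub contDiff_const), fun t => hK _, ε, hε,
    fun t ht => hzero _ (by linarith)⟩

lemma IsSmoothControl.eqOn_zero_deriv_deriv {K : Submodule ℂ E} {f : ℝ → E}
    (hf : IsSmoothControl K f) : EqOn (deriv (deriv f)) 0 (Iic 0) := by
  obtain ⟨-, -, ε, hε, hzero⟩ := hf
  have hf0 : EqOn f 0 (Iio ε) := fun t ht => hzero t ht.le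
  exact (eqOn_zero_Iio_deriv (eqOn_zero_Iio_deriv hf0)).mono (Iic_subset_Iio.mpr hε)

end SmoothControl

lemma wave_comp_sub (T : H →L[ℂ] H) {f : ℝ → H} (hf : EqOn (deriv (deriv f)) 0 (Iic 0))
    {τ : ℝ} (hτ : 0 ≤ τ) (t : ℝ) :
    wave T (fun t => f (t - τ)) t = wave T f (t - τ) := by
  simp only [wave, deriv_deriv_comp_sub_const]
  rw [intervalIntegral.integral_delay _ hf hτ]

theorem stmt4_general (L : H →ₗ.[ℂ] H) (T : H →L[ℂ] H) (K : Submodule ℂ H)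
    (f : ℝ → H) (hf : IsSmoothControl K f) (τ : ℝ) (hτ : 0 < τ) :
    IsSmoothControl K (fun t => f (t - τ)) ∧
    ∀ t : ℝ, 0 ≤ t → wave T (fun t' => f (t' - τ)) t = wave T f (t - τ) :=
  ⟨hf.comp_sub hτ.le, fun t _ => wave_comp_sub T hf.eqOn_zero_deriv_deriv hτ.le t⟩

/-- steady-state property. Let `f ∈ M` (extended by zero to `t < 0`) and for
`τ > 0` let `(𝒯_τ f)(t) = f(t − τ)` be the delayed control.  Then `𝒯_τ f ∈ M` and
`u^{𝒯_τ f}(t) = u^f(t − τ)` for all `t ≥ 0`. -/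
theorem stmt4 (L₀ L : H →ₗ.[ℂ] H) (T : H →L[ℂ] H) (K : Submodule ℂ H)
    [K.HasOrthogonalProjection] (hs : Setting L₀ L T K)
    (f : ℝ → H) (hf : IsSmoothControl K f) (τ : ℝ) (hτ : 0 < τ) :
    IsSmoothControl K (fun t => f (t - τ)) ∧
    ∀ t : ℝ, 0 ≤ t → wave T (fun t' => f (t' - τ)) t = wave T f (t - τ) :=
  stmt4_general L T K f hf τ hτ
end

section
/- Invariance of reachable sets: for every τ ≥ 0, U^τ ⊆ dom L₀* and the image L₀*(U^τ) equals U^τ; consequently L₀*(U) = U. -/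
open MeasureTheory
open scoped ComplexInnerProductSpace

variable {H : Type*} [NormedAddCommGroup H] [InnerProductSpace ℂ H] [CompleteSpace H]

/-! The key identity is `∫₀ᵗ I^{t-s} g(s) ds = -T u^g(t)` for `g ∈ C²` with `g(0) = g'(0) = 0`.
The functional calculus turns the scalar identity `∫₀ʳ (r-σ) h_σ(x) dσ = r x - x h_r(x)`
(`x ≥ 0`) into `T Iʳ = r T - ∫₀ʳ (r-σ) I^σ dσ`; inserted under the integral, together with
Fubini on the triangle `s + σ ≤ t` and Taylor's formula `g(u) = ∫₀ᵘ (u-s) g''(s) ds`, this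
gives the identity. Hence `u^f(τ) = -f(τ) + T(-u^{f''}(τ)) ∈ ker L₀* + ran T ⊆ dom L₀*` with
`L₀* u^f(τ) = -u^{f''}(τ)`. Since `f ↦ -f''` maps the controls onto themselves (a double
primitive of a control is a control), `L₀*` maps `U^τ` onto `U^τ`, and by linearity `U` onto
`U`. -/

open Real Set Function Filter Topology

noncomputable def waveSymbol (t x : ℝ) : ℝ :=
  if 0 < x then √x * sin (t / √x) else 0

lemma waveOp_eq_cfc (T : H →L[ℂ] H) (t : ℝ) : waveOp T t = cfc (waveSymbol t) T := rfl

lemma waveSymbol_eq (t x : ℝ) : waveSymbol t x = √x * sin (t / √x) := by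
  unfold waveSymbol
  split_ifs with hx
  · rfl
  · simp [sqrt_eq_zero'.2 (not_lt.1 hx)]

lemma abs_waveSymbol_sub_le (t t' x : ℝ) : |waveSymbol t x - waveSymbol t' x| ≤ |t - t'| := by
  rcases le_or_gt x 0 with hx | hx
  · simp [waveSymbol, not_lt.2 hx]
  · have hsx : 0 < √x := sqrt_pos.2 hx
    calc |waveSymbol t x - waveSymbol t' x|
        = √x * |sin (t / √x) - sin (t' / √x)| := by
          rw [waveSymbol_eq, waveSymbol_eq, ← mul_sub, abs_mul, abs_of_pos hsx]
      _ ≤ √x * |t / √x - t' / √x| := mul_le_mul_of_nonneg_left (abs_sin_sub_sin_le _ _) hsx.le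
      _ = |t - t'| := by rw [← sub_div, abs_div, abs_of_pos hsx]; field_simp

lemma abs_waveSymbol_le (t x : ℝ) : |waveSymbol t x| ≤ |t| := by
  simpa [waveSymbol] using abs_waveSymbol_sub_le t 0 x

lemma continuous_waveSymbol : Continuous (uncurry waveSymbol) := by
  have h : uncurry waveSymbol = fun p : ℝ × ℝ => √p.2 * sin (p.1 / √p.2) :=
    funext fun p => waveSymbol_eq p.1 p.2
  rw [h, continuous_iff_continuousAt]
  rintro ⟨t, x⟩
  rcases le_or_gt x 0 with hx | hx
  · have hsqrt : Tendsto (fun p : ℝ × ℝ => √p.2) (𝓝 (t, x)) (𝓝 0) := by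
      simpa [sqrt_eq_zero'.2 hx] using continuous_snd.sqrt.tendsto (t, x)
    simpa [ContinuousAt, sqrt_eq_zero'.2 hx] using
      hsqrt.zero_mul_isBoundedUnder_le
        (isBoundedUnder_of ⟨1, fun p => by simp [abs_sin_le_one]⟩)
  · have : √x ≠ 0 := (sqrt_pos.2 hx).ne'
    fun_prop (disch := assumption)

lemma continuous_waveSymbol_left (x : ℝ) : Continuous fun t => waveSymbol t x :=
  continuous_waveSymbol.comp (continuous_id.prodMk continuous_const)

lemma continuous_waveSymbol_right (t : ℝ) : Continuous (waveSymbol t) :=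
  continuous_waveSymbol.comp (Continuous.prodMk_right t)

lemma integral_sub_mul_waveSymbol (r : ℝ) {x : ℝ} (hx : 0 ≤ x) :
    ∫ σ in (0:ℝ)..r, (r - σ) * waveSymbol σ x = r * x - x * waveSymbol r x := by
  rcases hx.eq_or_lt with rfl | hx
  · simp [waveSymbol]
  obtain ⟨a, ha, rfl⟩ : ∃ a > 0, a ^ 2 = x := ⟨√x, sqrt_pos.2 hx, sq_sqrt hx.le⟩
  have hsymb (σ : ℝ) : waveSymbol σ (a ^ 2) = a * sin (σ / a) := by
    rw [waveSymbol_eq, sqrt_sq ha.le]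
  have hderiv (σ : ℝ) : HasDerivAt
      (fun σ => (σ - r) * (a ^ 2 * cos (σ / a)) - a ^ 2 * a * sin (σ / a))
      ((r - σ) * waveSymbol σ (a ^ 2)) σ := by
    have hdiv : HasDerivAt (fun σ : ℝ => σ / a) (1 / a) σ := (hasDerivAt_id σ).div_const a
    refine ((((hasDerivAt_id σ).sub_const r).mul
      (((hasDerivAt_cos _).comp σ hdiv).const_mul _)).sub
      (((hasDerivAt_sin _).comp σ hdiv).const_mul _)).congr_deriv ?_
    simp only [hsymb, id, Function.comp_apply]
    field_simp
    ring
  rw [intervalIntegral.integral_eq_sub_of_hasDerivAt (fun σ _ => hderiv σ)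
    (((continuous_const.sub continuous_id).mul
      (continuous_waveSymbol_left _)).intervalIntegrable 0 r), hsymb]
  simp only [sub_self, zero_mul, zero_sub, zero_div, sin_zero, cos_zero]
  ring

section WaveOp

variable (T : H →L[ℂ] H)

lemma lipschitzWith_waveOp : LipschitzWith 1 (waveOp T) := by
  refine LipschitzWith.of_dist_le_mul fun t t' => ?_
  rw [dist_eq_norm, dist_eq_norm, NNReal.coe_one, one_mul, waveOp_eq_cfc, waveOp_eq_cfc,
    ← cfc_sub _ _ T (continuous_waveSymbol_right t).continuousOn
      (continuous_waveSymbol_right t').continuousOn]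
  exact norm_cfc_le (norm_nonneg _) fun x _ => abs_waveSymbol_sub_le t t' x

@[fun_prop]
lemma continuous_waveOp : Continuous (waveOp T) :=
  (lipschitzWith_waveOp T).continuous

variable {T}

lemma integral_sub_smul_waveOp (hT : T.IsPositive) {r : ℝ} (hr : 0 ≤ r) :
    ∫ σ in (0:ℝ)..r, (r - σ) • waveOp T σ = r • T - T * waveOp T r := by
  have hspec : ∀ x ∈ spectrum ℝ T, 0 ≤ x := by
    rw [← ContinuousLinearMap.nonneg_iff_isPositive] at hT
    exact fun x hx => spectrum_nonneg_of_nonneg hT hx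
  have hsa : IsSelfAdjoint T := hT.isSelfAdjoint
  calc ∫ σ in (0:ℝ)..r, (r - σ) • waveOp T σ
      = ∫ σ in Ioc 0 r, cfc (fun x => (r - σ) * waveSymbol σ x) T := by
        rw [intervalIntegral.integral_of_le hr]
        congr 1 with σ
        rw [cfc_const_mul _ _ T (continuous_waveSymbol_right σ).continuousOn, waveOp_eq_cfc]
    _ = cfc (fun x => ∫ σ in Ioc 0 r, (r - σ) * waveSymbol σ x) T := by
        refine (cfc_integral _ (fun σ => |r - σ| * |σ|) T
          ((continuous_const.sub continuous_fst).mul continuous_waveSymbol).continuousOn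
          (.of_forall fun σ x _ => ?_) ?_).symm
        · rw [norm_mul]
          exact mul_le_mul_of_nonneg_left (abs_waveSymbol_le σ x) (norm_nonneg _)
        · exact (((continuous_const.sub continuous_id).abs).mul
            continuous_abs).integrableOn_Ioc.hasFiniteIntegral
    _ = cfc (fun x => r * x - x * waveSymbol r x) T := by
        refine cfc_congr fun x hx => ?_
        rw [← intervalIntegral.integral_of_le hr, integral_sub_mul_waveSymbol r (hspec x hx)]
    _ = r • T - T * waveOp T r := by
        have hcont := continuous_waveSymbol_right r
        rw [cfc_sub _ _ T, cfc_const_mul_id r T, cfc_mul _ _ T,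
          cfc_id' ℝ T, waveOp_eq_cfc]

lemma apply_waveOp_eq (hT : T.IsPositive) {r : ℝ} (hr : 0 ≤ r) (y : H) :
    T (waveOp T r y) = r • T y - ∫ σ in (0:ℝ)..r, (r - σ) • waveOp T σ y := by
  have hint : IntervalIntegrable (fun σ : ℝ => (r - σ) • waveOp T σ) volume 0 r :=
    Continuous.intervalIntegrable (by fun_prop) 0 r
  have happly : ∫ σ in (0:ℝ)..r, (r - σ) • waveOp T σ y
      = (∫ σ in (0:ℝ)..r, (r - σ) • waveOp T σ) y :=
    (ContinuousLinearMap.intervalIntegral_apply hint y).symm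
  rw [happly, integral_sub_smul_waveOp hT hr]
  simp

end WaveOp

section Calculus

variable {E : Type*} [NormedAddCommGroup E] [NormedSpace ℝ E]

lemma intervalIntegral_indicator_Iic {f : ℝ → E} {a t : ℝ} (ha : 0 ≤ a) (hat : a ≤ t) :
    ∫ x in (0:ℝ)..t, (Iic a).indicator f x = ∫ x in (0:ℝ)..a, f x := by
  rw [intervalIntegral.integral_of_le (ha.trans hat), intervalIntegral.integral_of_le ha,
    setIntegral_indicator measurableSet_Iic, Ioc_inter_Iic, inf_of_le_right hat]

lemma integral_integral_triangle_swap {F : ℝ → ℝ → E} (hF : Continuous (uncurry F)) {t : ℝ}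
    (ht : 0 ≤ t) :
    ∫ s in (0:ℝ)..t, ∫ σ in (0:ℝ)..(t - s), F s σ
      = ∫ σ in (0:ℝ)..t, ∫ s in (0:ℝ)..(t - σ), F s σ := by
  set S : Set (ℝ × ℝ) := {p | p.1 + p.2 ≤ t}
  set G : ℝ → ℝ → E := fun s σ => S.indicator (uncurry F) (s, σ)
  have hrows : ∀ s ∈ uIcc 0 t, ∫ σ in (0:ℝ)..(t - s), F s σ = ∫ σ in (0:ℝ)..t, G s σ := by
    intro s hs
    rw [uIcc_of_le ht] at hs
    have hG : G s = (Iic (t - s)).indicator (F s) := funext fun σ => by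
      simp only [G, S, indicator_apply, mem_ofPred_eq, mem_Iic, le_sub_iff_add_le',
        uncurry_apply_pair]
    rw [hG, intervalIntegral_indicator_Iic (by linarith [hs.2]) (by linarith [hs.1])]
  have hcols : ∀ σ ∈ uIcc 0 t, ∫ s in (0:ℝ)..(t - σ), F s σ = ∫ s in (0:ℝ)..t, G s σ := by
    intro σ hσ
    rw [uIcc_of_le ht] at hσ
    have hG : (fun s => G s σ) = (Iic (t - σ)).indicator (fun s => F s σ) := funext fun s => by
      simp only [G, S, indicator_apply, mem_ofPred_eq, mem_Iic, le_sub_iff_add_le,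
        uncurry_apply_pair]
    rw [hG, intervalIntegral_indicator_Iic (by linarith [hσ.2]) (by linarith [hσ.1])]
  have hint : IntegrableOn (uncurry G) (uIoc 0 t ×ˢ uIoc 0 t) :=
    ((hF.continuousOn.integrableOn_compact (isCompact_Icc.prod isCompact_Icc)).mono_set
      (prod_mono uIoc_subset_uIcc uIoc_subset_uIcc)).indicator
      (measurableSet_le (measurable_fst.add measurable_snd) measurable_const)
  rw [intervalIntegral.integral_congr hrows, intervalIntegral_intervalIntegral_swap hint,
    intervalIntegral.integral_congr hcols]

variable [CompleteSpace E]

lemma integral_sub_smul_deriv_deriv {g : ℝ → E} (hg : ContDiff ℝ 2 g) (h0 : g 0 = 0)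
    (h0' : deriv g 0 = 0) (u : ℝ) : ∫ s in (0:ℝ)..u, (u - s) • deriv (deriv g) s = g u := by
  have hg' : ContDiff ℝ 1 (deriv g) := ContDiff.deriv' (n := 1) hg
  have hderiv (s : ℝ) : HasDerivAt (fun s => (u - s) • deriv g s + g s)
      ((u - s) • deriv (deriv g) s) s := by
    refine ((((hasDerivAt_id s).const_sub u).smul
      ((hg'.differentiable one_ne_zero) s).hasDerivAt).add
      ((hg.differentiable (by norm_num)) s).hasDerivAt).congr_deriv ?_
    simp only [neg_smul, one_smul]
    abel
  rw [intervalIntegral.integral_eq_sub_of_hasDerivAt (fun s _ => hderiv s)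
    (Continuous.intervalIntegrable (by fun_prop) 0 u)]
  simp [h0, h0']

end Calculus

section SourceWave

variable {T : H →L[ℂ] H}

lemma wave_eq_neg_add_sourceWave (f : ℝ → H) (t : ℝ) :
    wave T f t = -f t + sourceWave T (deriv (deriv f)) t := rfl

lemma integral_integral_sub_smul_waveOp {g : ℝ → H} (hg : ContDiff ℝ 2 g) (h0 : g 0 = 0)
    (h0' : deriv g 0 = 0) {t : ℝ} (ht : 0 ≤ t) :
    ∫ s in (0:ℝ)..t, ∫ σ in (0:ℝ)..(t - s), (t - s - σ) • waveOp T σ (deriv (deriv g) s)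
      = sourceWave T g t := by
  have hq : Continuous (deriv (deriv g)) := (ContDiff.deriv' (n := 1) hg).continuous_deriv_one
  have hinner (σ : ℝ) :
      ∫ s in (0:ℝ)..(t - σ), (t - s - σ) • waveOp T σ (deriv (deriv g) s)
        = waveOp T σ (g (t - σ)) := by
    rw [← integral_sub_smul_deriv_deriv hg h0 h0' (t - σ),
      ← (waveOp T σ).intervalIntegral_comp_comm (Continuous.intervalIntegrable (by fun_prop) _ _)]
    congr 1 with s
    rw [ContinuousLinearMap.map_smul_of_tower, sub_right_comm]
  have hreflect := intervalIntegral.integral_comp_sub_left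
    (fun σ => waveOp T σ (g (t - σ))) (a := 0) (b := t) t
  simp only [sub_sub_cancel, sub_zero, sub_self] at hreflect
  have hF : Continuous (uncurry fun s σ => (t - s - σ) • waveOp T σ (deriv (deriv g) s)) := by
    rw [uncurry_def]
    fun_prop
  rw [integral_integral_triangle_swap hF ht,
    intervalIntegral.integral_congr fun σ _ => hinner σ, ← hreflect]
  rfl

lemma sourceWave_eq_neg_apply_wave (hT : T.IsPositive) {g : ℝ → H} (hg : ContDiff ℝ 2 g)
    (h0 : g 0 = 0) (h0' : deriv g 0 = 0) {t : ℝ} (ht : 0 ≤ t) :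
    sourceWave T g t = -T (wave T g t) := by
  set q := deriv (deriv g)
  have hq : Continuous q := (ContDiff.deriv' (n := 1) hg).continuous_deriv_one
  have hWq : Continuous fun s => waveOp T (t - s) (q s) := by fun_prop
  calc sourceWave T g t
      = ∫ s in (0:ℝ)..t, ((t - s) • T (q s) - T (waveOp T (t - s) (q s))) := by
        rw [← integral_integral_sub_smul_waveOp hg h0 h0' ht]
        refine intervalIntegral.integral_congr fun s hs => ?_
        rw [uIcc_of_le ht] at hs
        rw [apply_waveOp_eq hT (sub_nonneg.2 hs.2), sub_sub_cancel]
    _ = T (g t) - T (sourceWave T q t) := by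
        rw [intervalIntegral.integral_sub (Continuous.intervalIntegrable (by fun_prop) _ _)
            (Continuous.intervalIntegrable (by fun_prop) _ _),
          ← integral_sub_smul_deriv_deriv hg h0 h0' t, sourceWave,
          ← T.intervalIntegral_comp_comm (hWq.intervalIntegrable _ _),
          ← T.intervalIntegral_comp_comm (Continuous.intervalIntegrable (by fun_prop) _ _)]
        simp only [ContinuousLinearMap.map_smul_of_tower]
        rfl
    _ = -T (wave T g t) := by
        rw [wave_eq_neg_add_sourceWave, map_add, map_neg, neg_add, neg_neg, sub_eq_add_neg]

end SourceWave

section Controls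

variable {E : Type*} [NormedAddCommGroup E] [InnerProductSpace ℂ E] {K : Submodule ℂ E}
  {f : ℝ → E}

lemma Submodule.deriv_mem [K.HasOrthogonalProjection] (hf : Differentiable ℝ f)
    (hK : ∀ t, f t ∈ K) (t : ℝ) : deriv f t ∈ K := by
  have hPf : (fun s => K.starProjection (f s)) = f :=
    funext fun s => K.starProjection_eq_self_iff.2 (hK s)
  have hP : HasDerivAt (fun s => K.starProjection (f s)) (K.starProjection (deriv f t)) t :=
    (K.starProjection.restrictScalars ℝ).hasFDerivAt.comp_hasDerivAt t (hf t).hasDerivAt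
  rw [← hPf, hP.deriv]
  exact K.starProjection_apply_mem _

lemma Submodule.intervalIntegral_mem [K.HasOrthogonalProjection] [CompleteSpace E] {a b : ℝ}
    (hf : IntervalIntegrable f volume a b) (hK : ∀ t, f t ∈ K) : ∫ t in a..b, f t ∈ K := by
  rw [← intervalIntegral.integral_congr fun t _ => K.starProjection_eq_self_iff.2 (hK t),
    K.starProjection.intervalIntegral_comp_comm hf]
  exact K.starProjection_apply_mem _

namespace IsSmoothControl

lemma apply_zero (hf : IsSmoothControl K f) : f 0 = 0 :=
  let ⟨_, _, _, hε, hf0⟩ := hf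
  hf0 0 hε.le

lemma neg (hf : IsSmoothControl K f) : IsSmoothControl K (-f) :=
  let ⟨hsm, hK, ε, hε, hf0⟩ := hf
  ⟨hsm.neg, fun t => K.neg_mem (hK t), ε, hε, fun t ht => by simp [hf0 t ht]⟩

protected lemma deriv [K.HasOrthogonalProjection] (hf : IsSmoothControl K f) :
    IsSmoothControl K (deriv f) := by
  obtain ⟨hsm, hK, ε, hε, hf0⟩ := hf
  refine ⟨(contDiff_infty_iff_deriv.1 hsm).2, K.deriv_mem (hsm.differentiable (by simp)) hK,
    ε / 2, half_pos hε, fun t ht => ?_⟩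
  have hfloc : f =ᶠ[𝓝 t] fun _ => 0 :=
    eventually_of_mem (Iio_mem_nhds (by linarith)) fun s hs => hf0 s (le_of_lt hs)
  rw [hfloc.deriv_eq, deriv_const]

lemma primitive [K.HasOrthogonalProjection] [CompleteSpace E] (hf : IsSmoothControl K f) :
    IsSmoothControl K fun t => ∫ s in (0:ℝ)..t, f s := by
  obtain ⟨hsm, hK, ε, hε, hf0⟩ := hf
  have hc : Continuous f := hsm.continuous
  refine ⟨contDiff_infty_iff_deriv.2
    ⟨fun t => (hc.integral_hasStrictDerivAt 0 t).hasDerivAt.differentiableAt, ?_⟩,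
    fun t => K.intervalIntegral_mem (hc.intervalIntegrable _ _) hK, ε, hε, fun t ht => ?_⟩
  · rwa [funext (hc.deriv_integral f 0)]
  · dsimp only
    rw [intervalIntegral.integral_congr (g := fun _ => 0) fun s hs =>
      hf0 s (hs.2.trans (max_le hε.le ht)), intervalIntegral.integral_zero]

lemma exists_deriv_deriv_eq [K.HasOrthogonalProjection] [CompleteSpace E]
    (hf : IsSmoothControl K f) : ∃ g, IsSmoothControl K g ∧ deriv (deriv g) = f :=
  ⟨_, hf.primitive.primitive, by
    rw [funext (Continuous.deriv_integral _ hf.primitive.1.continuous 0),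
      funext (Continuous.deriv_integral _ hf.1.continuous 0)]⟩

end IsSmoothControl

end Controls

lemma wave_neg (T : H →L[ℂ] H) (f : ℝ → H) (t : ℝ) : wave T (-f) t = -wave T f t := by
  simp only [wave, deriv.neg', deriv.fun_neg, Pi.neg_apply, map_neg,
    intervalIntegral.integral_neg, neg_add]

namespace LinearPMap

variable {R E F : Type*} [Ring R] [AddCommGroup E] [Module R E] [AddCommGroup F] [Module R F]

def image (A : E →ₗ.[R] F) (s : Set E) : Set F :=
  {z | ∃ x, ∃ hx : x ∈ A.domain, x ∈ s ∧ A ⟨x, hx⟩ = z}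

variable {A : E →ₗ.[R] F}

lemma image_eq_image_preimage (s : Set E) : A.image s = A.toFun '' ((↑) ⁻¹' s) := by
  ext z
  constructor
  · rintro ⟨x, hx, hxs, rfl⟩
    exact ⟨⟨x, hx⟩, hxs, rfl⟩
  · rintro ⟨⟨x, hx⟩, hxs, rfl⟩
    exact ⟨x, hx, hxs, rfl⟩

lemma image_iUnion₂ {ι : Type*} (I : Set ι) (s : ι → Set E) :
    A.image (⋃ i ∈ I, s i) = ⋃ i ∈ I, A.image (s i) := by
  simp only [image_eq_image_preimage, preimage_iUnion₂, Set.image_iUnion₂]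

lemma image_span {s : Set E} (hs : s ⊆ A.domain) :
    A.image (Submodule.span R s) = Submodule.span R (A.image s) := by
  have hspan : Submodule.span R s = (Submodule.span R ((↑) ⁻¹' s)).map A.domain.subtype := by
    rw [← Submodule.span_image, Submodule.coe_subtype,
      image_preimage_eq_of_subset (by rwa [Subtype.range_coe_subtype])]
  rw [image_eq_image_preimage, image_eq_image_preimage, ← Submodule.map_span, hspan,
    ← Submodule.coe_subtype, ← Submodule.comap_coe,
    Submodule.comap_map_eq_of_injective A.domain.injective_subtype, Submodule.map_coe]

end LinearPMap

namespace Setting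

variable {L₀ L : H →ₗ.[ℂ] H} {T : H →L[ℂ] H} {K : Submodule ℂ H}

lemma isPositive (hs : Setting L₀ L T K) : T.IsPositive :=
  ⟨hs.T_selfadjoint.isSymmetric, fun x => by
    rw [ContinuousLinearMap.reApplyInnerSelf_apply]
    exact hs.T_positive x⟩

lemma exists_adjoint_add_apply_eq (hs : Setting L₀ L T K) {k : H} (hk : k ∈ K) (y : H) :
    ∃ h : k + T y ∈ L₀.adjoint.domain, L₀.adjoint ⟨k + T y, h⟩ = y := by
  obtain ⟨hkdom, hk0⟩ := (hs.kernel k).1 hk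
  have hTy : T y ∈ L.domain := hs.T_mem_domain y
  have hTy' : T y ∈ L₀.adjoint.domain := hs.le_adjoint.1 hTy
  refine ⟨add_mem hkdom hTy', ?_⟩
  have hsplit :
      (⟨k + T y, add_mem hkdom hTy'⟩ : L₀.adjoint.domain) = ⟨k, hkdom⟩ + ⟨T y, hTy'⟩ := rfl
  rw [hsplit, LinearPMap.map_add, hk0, zero_add, ← hs.le_adjoint.2 (x := ⟨T y, hTy⟩) rfl,
    hs.T_inv_right y hTy]

variable [K.HasOrthogonalProjection]

lemma exists_adjoint_wave_eq (hs : Setting L₀ L T K) {f : ℝ → H} (hf : IsSmoothControl K f)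
    {τ : ℝ} (hτ : 0 ≤ τ) :
    ∃ h : wave T f τ ∈ L₀.adjoint.domain,
      L₀.adjoint ⟨wave T f τ, h⟩ = -wave T (deriv (deriv f)) τ := by
  have hf2 := hf.deriv.deriv
  have hwave : wave T f τ = -f τ + T (-wave T (deriv (deriv f)) τ) := by
    rw [wave_eq_neg_add_sourceWave, sourceWave_eq_neg_apply_wave hs.isPositive
      (hf2.1.of_le (WithTop.coe_le_coe.2 le_top)) hf2.apply_zero hf2.deriv.apply_zero hτ, map_neg]
  rw [hwave]
  exact hs.exists_adjoint_add_apply_eq (K.neg_mem (hf.2.1 τ)) _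

lemma reachSet_subset_domain (hs : Setting L₀ L T K) {τ : ℝ} (hτ : 0 ≤ τ) :
    reachSet K T τ ⊆ L₀.adjoint.domain := by
  rw [reachSet, if_pos hτ]
  rintro _ ⟨f, hf, rfl⟩
  exact (hs.exists_adjoint_wave_eq hf hτ).1

lemma image_reachSet (hs : Setting L₀ L T K) {τ : ℝ} (hτ : 0 ≤ τ) :
    L₀.adjoint.image (reachSet K T τ) = reachSet K T τ := by
  rw [reachSet, if_pos hτ]
  apply Subset.antisymm
  · rintro _ ⟨_, _, ⟨f, hf, rfl⟩, rfl⟩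
    obtain ⟨_, hval⟩ := hs.exists_adjoint_wave_eq hf hτ
    exact ⟨-deriv (deriv f), hf.deriv.deriv.neg, by rw [wave_neg, ← hval]⟩
  · rintro _ ⟨f, hf, rfl⟩
    obtain ⟨g, hg, hg''⟩ := hf.neg.exists_deriv_deriv_eq
    obtain ⟨hd, hval⟩ := hs.exists_adjoint_wave_eq hg hτ
    exact ⟨wave T g τ, hd, ⟨g, hg, rfl⟩, by rw [hval, hg'', wave_neg, neg_neg]⟩

end Setting

/-- invariance of reachable sets. For every `τ ≥ 0`, `U^τ ⊆ dom L₀*` and the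
image `L₀*(U^τ)` equals `U^τ`; consequently `L₀*(U) = U`. -/
theorem stmt6 (L₀ L : H →ₗ.[ℂ] H) (T : H →L[ℂ] H) (K : Submodule ℂ H)
    [Submodule.HasOrthogonalProjection K] (hs : Setting L₀ L T K) (τ : ℝ) (hτ : 0 ≤ τ) :
    (∀ x ∈ reachSet K T τ, x ∈ L₀.adjoint.domain) ∧
    {z : H | ∃ x, ∃ hx : x ∈ L₀.adjoint.domain, x ∈ reachSet K T τ ∧ L₀.adjoint ⟨x, hx⟩ = z}
      = reachSet K T τ ∧
    (∀ x ∈ (reachSpan K T : Set H), x ∈ L₀.adjoint.domain) ∧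
    {z : H | ∃ x, ∃ hx : x ∈ L₀.adjoint.domain, x ∈ reachSpan K T ∧ L₀.adjoint ⟨x, hx⟩ = z}
      = (reachSpan K T : Set H) := by
  have hU : (⋃ σ ∈ Ioi (0:ℝ), reachSet K T σ) ⊆ L₀.adjoint.domain :=
    iUnion₂_subset fun σ hσ => hs.reachSet_subset_domain (le_of_lt hσ)
  refine ⟨hs.reachSet_subset_domain hτ, hs.image_reachSet hτ, Submodule.span_le.2 hU, ?_⟩
  change L₀.adjoint.image (reachSpan K T) = reachSpan K T
  rw [reachSpan, LinearPMap.image_span hU, LinearPMap.image_iUnion₂,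
    iUnion₂_congr fun σ (hσ : σ ∈ Ioi 0) => hs.image_reachSet (le_of_lt hσ)]
end
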